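/- arXiv:2010.10421 — 2 statements merged into one kernel-verified Lean document; each statement's English description precedes it below -/
import Mathlib

section
/- (Small gain theorem.) Let λ ∈ (0,1), let m ≥ 1, and let s₁, …, s_m be sequences of vectors in ℝⁿ. Suppose there exist nonnegative constants γ₁, …, γ_m and ω₁, …, ω_m such that for every j ∈ {1,…,m} (with s_{m+1} := s₁) and every K ≥ 0 one has ‖s_{j+1}‖^{λ,K} ≤ γ_j ‖s_j‖^{λ,K} + ω_j, and suppose γ₁·γ₂·⋯·γ_m < 1. Then for each j ∈ {1,…,m} there exists a constant c_j ≥ 0 such that ‖s_j^k‖ ≤ c_j λ^k for all k ≥ 0 (equivalently ‖s_j‖^λ ≤ c_j). -/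
open Matrix
open scoped RealInnerProductSpace

/-- The averaging matrix `P = (1/n)·11ᵀ`. -/
noncomputable def avgMatrix (n : ℕ) : Matrix (Fin n) (Fin n) ℝ :=
  Matrix.of fun _ _ => (n : ℝ)⁻¹

/-- Action of a matrix on a vector of `ℝⁿ` with the Euclidean norm. -/
noncomputable def mulE {n : ℕ} (M : Matrix (Fin n) (Fin n) ℝ)
    (v : EuclideanSpace ℝ (Fin n)) : EuclideanSpace ℝ (Fin n) :=
  Matrix.toEuclideanLin M v

/-- Induced 2-norm of a matrix. -/
noncomputable def opNorm2 {n : ℕ} (M : Matrix (Fin n) (Fin n) ℝ) : ℝ :=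
  ‖LinearMap.toContinuousLinearMap (Matrix.toEuclideanLin M)‖

/-- `‖s‖^{λ,K} = max_{0 ≤ k ≤ K} ‖s^k‖/λ^k`. -/
noncomputable def seqNormK {n : ℕ} (s : ℕ → EuclideanSpace ℝ (Fin n)) (lam : ℝ) (K : ℕ) : ℝ :=
  (Finset.range (K + 1)).sup' ⟨0, Finset.mem_range.mpr (Nat.succ_pos K)⟩ (fun k => ‖s k‖ / lam ^ k)

/-!
Going once around the cycle `s₁ → s₂ → ⋯ → s_m → s₁` composes the gain inequalities into
`‖s_j‖^{λ,K} ≤ (γ₁ ⋯ γ_m) ‖s_j‖^{λ,K} + b_j` with `b_j` independent of `K`. Since the product of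
the gains is below `1`, this gives `‖s_j‖^{λ,K} ≤ b_j / (1 - γ₁ ⋯ γ_m)` uniformly in `K`, and
`‖s_j^k‖ / λ^k ≤ ‖s_j‖^{λ,k}` turns this into the exponential bound.
-/

open Finset Fin.NatCast

section SeqNormK

variable {n : ℕ} (s : ℕ → EuclideanSpace ℝ (Fin n)) (lam : ℝ)

lemma div_pow_le_seqNormK {k K : ℕ} (hk : k ≤ K) : ‖s k‖ / lam ^ k ≤ seqNormK s lam K :=
  le_sup' (fun k => ‖s k‖ / lam ^ k) (mem_range_succ_iff.mpr hk)

lemma seqNormK_nonneg (K : ℕ) : 0 ≤ seqNormK s lam K := by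
  have h0 := div_pow_le_seqNormK s lam (Nat.zero_le K)
  rw [pow_zero, div_one] at h0
  exact (norm_nonneg _).trans h0

variable {s lam}

lemma norm_le_mul_pow_of_seqNormK_le (hlam : 0 < lam) {c : ℝ} (h : ∀ K, seqNormK s lam K ≤ c) :
    0 ≤ c ∧ ∀ k, ‖s k‖ ≤ c * lam ^ k :=
  ⟨(seqNormK_nonneg s lam 0).trans (h 0), fun k =>
    (div_le_iff₀ (pow_pos hlam k)).mp ((div_pow_le_seqNormK s lam le_rfl).trans (h k))⟩

end SeqNormK

section FinRotate

variable {m : ℕ} [NeZero m]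

lemma finRotate_iterate_apply (t : ℕ) (j : Fin m) : (finRotate m)^[t] j = j + t := by
  induction t with
  | zero => simp
  | succ t ih => rw [Function.iterate_succ_apply', ih, finRotate_apply, Nat.cast_succ, add_assoc]

lemma finRotate_iterate_self (j : Fin m) : (finRotate m)^[m] j = j := by
  rw [finRotate_iterate_apply, Fin.natCast_self, add_zero]

lemma prod_range_finRotate_iterate {M : Type*} [CommMonoid M] (f : Fin m → M) (j : Fin m) :
    ∏ i ∈ range m, f ((finRotate m)^[i] j) = ∏ i, f i := by
  rw [← Fin.prod_univ_eq_prod_range (fun i => f ((finRotate m)^[i] j))]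
  simp only [finRotate_iterate_apply, Fin.cast_val_eq_self]
  exact Equiv.prod_comp (Equiv.addLeft j) f

end FinRotate

lemma exists_apply_iterate_le_prod_mul_add {α ι : Type*} (σ : α → α) (x : ι → α → ℝ)
    (γ ω : α → ℝ) (hγ : ∀ a, 0 ≤ γ a) (h : ∀ K a, x K (σ a) ≤ γ a * x K a + ω a)
    (a : α) (t : ℕ) :
    ∃ b, ∀ K, x K (σ^[t] a) ≤ (∏ i ∈ range t, γ (σ^[i] a)) * x K a + b := by
  induction t with
  | zero => exact ⟨0, fun K => by simp⟩
  | succ t ih =>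
    obtain ⟨b, hb⟩ := ih
    refine ⟨γ (σ^[t] a) * b + ω (σ^[t] a), fun K => ?_⟩
    calc x K (σ^[t + 1] a)
        ≤ γ (σ^[t] a) * x K (σ^[t] a) + ω (σ^[t] a) := by
          rw [Function.iterate_succ_apply']; exact h K _
      _ ≤ γ (σ^[t] a) * ((∏ i ∈ range t, γ (σ^[i] a)) * x K a + b) + ω (σ^[t] a) := by
          gcongr
          · exact hγ _
          · exact hb K
      _ = _ := by rw [prod_range_succ]; ring

theorem small_gain_theorem_general {n m : ℕ}
    (lam : ℝ) (hlam : lam ∈ Set.Ioo (0 : ℝ) 1)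
    (s : Fin m → ℕ → EuclideanSpace ℝ (Fin n))
    (γ ω : Fin m → ℝ) (hγ : ∀ j, 0 ≤ γ j)
    (hchain : ∀ (j : Fin m) (K : ℕ),
      seqNormK (s (finRotate m j)) lam K ≤ γ j * seqNormK (s j) lam K + ω j)
    (hprod : ∏ j, γ j < 1) :
    ∀ j : Fin m, ∃ c : ℝ, 0 ≤ c ∧ ∀ k : ℕ, ‖s j k‖ ≤ c * lam ^ k := by
  intro j
  have := j.neZero
  obtain ⟨b, hb⟩ := exists_apply_iterate_le_prod_mul_add (finRotate m)
    (fun K i => seqNormK (s i) lam K) γ ω hγ (fun K i => hchain i K) j m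
  simp only [finRotate_iterate_self, prod_range_finRotate_iterate] at hb
  refine ⟨b / (1 - ∏ i, γ i), norm_le_mul_pow_of_seqNormK_le hlam.1 fun K => ?_⟩
  rw [le_div_iff₀ (sub_pos.mpr hprod)]
  linarith [hb K]

/-- **Small gain theorem.** -/
theorem small_gain_theorem {n m : ℕ} (hm : 1 ≤ m)
    (lam : ℝ) (hlam : lam ∈ Set.Ioo (0 : ℝ) 1)
    (s : Fin m → ℕ → EuclideanSpace ℝ (Fin n))
    (γ ω : Fin m → ℝ) (hγ : ∀ j, 0 ≤ γ j) (hω : ∀ j, 0 ≤ ω j)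
    (hchain : ∀ (j : Fin m) (K : ℕ),
      seqNormK (s (finRotate m j)) lam K ≤ γ j * seqNormK (s j) lam K + ω j)
    (hprod : ∏ j, γ j < 1) :
    ∀ j : Fin m, ∃ c : ℝ, 0 ≤ c ∧ ∀ k : ℕ, ‖s j k‖ ≤ c * lam ^ k :=
  small_gain_theorem_general lam hlam s γ ω hγ hchain hprod
end

section
/- Let μ, L, β > 0 and c₃ = 1/√(2L(1/β + 1/μ)). Let λ ∈ (0,1) satisfy 2L(1/λ² − 1) < c₃λμ/((c₃+1)(λ+1)), and let ρ satisfy 2L(1/λ² − 1) < ρ < c₃λμ/((c₃+1)(λ+1)). Then (i) λμ − ρ(λ+1) > 0, so that c₁ = (λ+1)/(λμ − ρ(λ+1)) > 0, and (ii) c₂ = 1 + ρ/L − 1/λ² − ρ³c₁²(1/β + 1/μ) > 0. -/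
/-!
With `a = λμ`, `b = λ + 1` and `c = c₃`, the bound `ρ < c a / ((c + 1) b)` says
`ρ b (c + 1) < c a`, which gives both `ρ b < a` and `ρ c₁ = ρ b / (a - ρ b) < c₃`.
Since `c₃² · 2L(1/β + 1/μ) = 1`, the cubic term is then `ρ (ρ c₁)² (1/β + 1/μ) < ρ / (2L)`,
and `c₂ > 1 - 1/λ² + ρ/(2L) > 0` by the lower bound on `ρ`.
-/

open Matrix
open scoped RealInnerProductSpace

section

variable {a b c ρ : ℝ}

theorem mul_mul_add_one_lt_of_lt_mul_div (hb : 0 < b) (hc : 0 < c)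
    (h : ρ < c * a / ((c + 1) * b)) : ρ * b * (c + 1) < c * a := by
  rw [lt_div_iff₀ (by positivity)] at h
  linarith

theorem sub_mul_pos_of_lt_mul_div (ha : 0 < a) (hb : 0 < b) (hc : 0 < c)
    (h : ρ < c * a / ((c + 1) * b)) : 0 < a - ρ * b := by
  nlinarith [mul_mul_add_one_lt_of_lt_mul_div hb hc h]

theorem mul_div_sub_mul_lt_of_lt_mul_div (ha : 0 < a) (hb : 0 < b) (hc : 0 < c)
    (h : ρ < c * a / ((c + 1) * b)) : ρ * (b / (a - ρ * b)) < c := by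
  rw [mul_div_assoc', div_lt_iff₀ (sub_mul_pos_of_lt_mul_div ha hb hc h)]
  linarith [mul_mul_add_one_lt_of_lt_mul_div hb hc h]

end

theorem constants_positive_general (μ L β lam ρ c₃ : ℝ)
    (hμ : 0 < μ) (hL : 0 < L) (hβ : 0 < β)
    (hc₃ : c₃ = 1 / Real.sqrt (2 * L * (1 / β + 1 / μ)))
    (hlam : lam ∈ Set.Ioo (0 : ℝ) 1)
    (hρ1 : 2 * L * (1 / lam ^ 2 - 1) < ρ)
    (hρ2 : ρ < c₃ * lam * μ / ((c₃ + 1) * (lam + 1))) :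
    0 < lam * μ - ρ * (lam + 1) ∧
    0 < (lam + 1) / (lam * μ - ρ * (lam + 1)) ∧
    0 < 1 + ρ / L - 1 / lam ^ 2 -
      ρ ^ 3 * ((lam + 1) / (lam * μ - ρ * (lam + 1))) ^ 2 * (1 / β + 1 / μ) := by
  obtain ⟨hlam0, hlam1⟩ := hlam
  set S := 1 / β + 1 / μ
  have hS : 0 < S := by positivity
  have hc₃pos : 0 < c₃ := by rw [hc₃]; positivity
  have hc₃sq : c₃ ^ 2 * S = 1 / (2 * L) := by
    rw [hc₃, div_pow, one_pow, Real.sq_sqrt (by positivity)]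
    field_simp [hS.ne']
  have hρ : 0 < ρ := by
    have : 1 < 1 / lam ^ 2 := one_lt_one_div (by positivity) (pow_lt_one₀ hlam0.le hlam1 two_ne_zero)
    exact (mul_pos (by positivity) (sub_pos.mpr this)).trans hρ1
  rw [mul_assoc] at hρ2
  have hlamμ : 0 < lam * μ := by positivity
  have hlam1p : 0 < lam + 1 := by positivity
  have hgap := sub_mul_pos_of_lt_mul_div hlamμ hlam1p hc₃pos hρ2
  refine ⟨hgap, by positivity, ?_⟩
  set c₁ := (lam + 1) / (lam * μ - ρ * (lam + 1))
  have hcubic : ρ ^ 3 * c₁ ^ 2 * S < ρ / (2 * L) :=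
    calc ρ ^ 3 * c₁ ^ 2 * S = ρ * (ρ * c₁) ^ 2 * S := by ring
      _ < ρ * c₃ ^ 2 * S := by
        gcongr
        exact mul_div_sub_mul_lt_of_lt_mul_div hlamμ hlam1p hc₃pos hρ2
      _ = ρ / (2 * L) := by rw [mul_assoc, hc₃sq, mul_one_div]
  have hρL : 1 / lam ^ 2 - 1 < ρ / (2 * L) := by rwa [lt_div_iff₀ (by positivity), mul_comm]
  have hρL2 : ρ / L = 2 * (ρ / (2 * L)) := by field_simp
  linarith

/-- Under the parameter conditions, `c₁ > 0` and `c₂ > 0`. -/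
theorem constants_positive (μ L β lam ρ c₃ : ℝ)
    (hμ : 0 < μ) (hL : 0 < L) (hβ : 0 < β)
    (hc₃ : c₃ = 1 / Real.sqrt (2 * L * (1 / β + 1 / μ)))
    (hlam : lam ∈ Set.Ioo (0 : ℝ) 1)
    (hcond : 2 * L * (1 / lam ^ 2 - 1) < c₃ * lam * μ / ((c₃ + 1) * (lam + 1)))
    (hρ1 : 2 * L * (1 / lam ^ 2 - 1) < ρ)
    (hρ2 : ρ < c₃ * lam * μ / ((c₃ + 1) * (lam + 1))) :
    0 < lam * μ - ρ * (lam + 1) ∧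
    0 < (lam + 1) / (lam * μ - ρ * (lam + 1)) ∧
    0 < 1 + ρ / L - 1 / lam ^ 2 -
      ρ ^ 3 * ((lam + 1) / (lam * μ - ρ * (lam + 1))) ^ 2 * (1 / β + 1 / μ) :=
  constants_positive_general μ L β lam ρ c₃ hμ hL hβ hc₃ hlam hρ1 hρ2
end
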